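/- Let G be a connected interval graph with interval model having pairwise distinct endpoints and vertices v_1,…,v_n in left-end ordering; let G_i = G[{v_1,…,v_i}], let F(v_i) denote the least-index neighbor of v_i, and let L(v_i) = v_q where q = max{k < i : v_k v_i ∉ E} (L(v_i) = v_0 if no such k exists). Suppose r < k < j < i are indices with F(v_i) = v_j, F(v_j) = v_k, F(v_k) = v_r, and not every vertex v_l with k < l < j is adjacent to a vertex of {v_j, v_r}. Suppose t = max{l : k < l < j and v_l v_j ∉ E} exists and let F(v_t) = v_b. Then: (a) if L(v_b) = v_0, the set {v_j, v_b} is a minimum cardinality semipaired dominating set of G_i; (b) if L(v_b) = v_1, the set {v_1, v_2, v_j, v_b} is a minimum cardinality semipaired dominating set of G_i; (c) if L(v_b) = v_s with s ≥ 2, then for every minimum cardinality semipaired dominating set D_s of G_s, the set D_s ∪ {v_j, v_b} is a minimum cardinality semipaired dominating set of G_i; in particular γ_pr2(G_i) = γ_pr2(G_s) + 2. -/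

import Mathlib

/-!
Everything rests on the umbrella property of a left-endpoint order: `x < y < z` and `x ~ z`
force `x ~ y`. A semi-PD set of `G_i` must dominate `v_t` and `v_i`, which takes a vertex in
`[v_b, v_j)` and one in `[v_j, v_i]`, while `{v_j, v_b}` (paired through `v_k`) dominates every
vertex from `v_b` on. This gives (a), and in (b) a third vertex is needed to dominate `v_1`, so
parity forces four.

For (c), restrict a semi-PD set `D` of `G_i` to `G_s`. A vertex of `G_s` adjacent to a vertex
above `s` lies in the clique `N[s]` of `G_s`, and any two vertices of the radius-2 ball around
`v_s` in `G_s` are at distance at most 2 in `G_s`. So the vertices whose partners lay above `s`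
can be re-paired among themselves, after adding or removing at most two vertices of `N[s]`
depending on parity and on whether `D` meets `N[s]`; the two vertices of `D` dominating `v_t`
and `v_i` pay for this, giving `γ_pr2(G_s) + 2 ≤ γ_pr2(G_i)`.
-/

/-- `D` is a semipaired dominating set of the subgraph of `G` induced by the vertex
set `S`: `D ⊆ S`, every vertex of `S` outside `D` has a neighbor in `D`, and `D` can
be partitioned into 2-element subsets (given by a fixed-point-free involution on `D`)
such that the two vertices in each pair are at distance at most 2 in `G[S]`
(adjacent, or having a common neighbor inside `S`). -/
def IsSemiPDOn {V : Type*} (G : SimpleGraph V) (S : Set V) (D : Finset V) : Prop :=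
  (∀ v ∈ D, v ∈ S) ∧
  (∀ v ∈ S, v ∉ D → ∃ u ∈ D, G.Adj u v) ∧
  ∃ f : V → V, ∀ v ∈ D, f v ∈ D ∧ f v ≠ v ∧ f (f v) = v ∧
    (G.Adj v (f v) ∨ ∃ w ∈ S, G.Adj v w ∧ G.Adj (f v) w)

/-- `D` is a minimum cardinality semipaired dominating set of `G[S]`. -/
def IsMinSemiPDOn {V : Type*} (G : SimpleGraph V) (S : Set V) (D : Finset V) : Prop :=
  IsSemiPDOn G S D ∧ ∀ D' : Finset V, IsSemiPDOn G S D' → D.card ≤ D'.card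

/-- The semipaired domination number of the subgraph of `G` induced by `S`. -/
noncomputable def gammaPr2On {V : Type*} (G : SimpleGraph V) (S : Set V) : ℕ :=
  sInf {c | ∃ D : Finset V, IsSemiPDOn G S D ∧ D.card = c}

open Finset

section SemiPairing

variable {V : Type*} (G : SimpleGraph V)

def DistLeTwoIn (S : Set V) (u v : V) : Prop :=
  G.Adj u v ∨ ∃ w ∈ S, G.Adj u w ∧ G.Adj v w

def Dominates (S : Set V) (D : Finset V) : Prop :=
  ∀ v ∈ S, v ∉ D → ∃ u ∈ D, G.Adj u v

def IsSemiPairing (S : Set V) (D : Finset V) (f : V → V) : Prop :=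
  ∀ v ∈ D, f v ∈ D ∧ f v ≠ v ∧ f (f v) = v ∧ DistLeTwoIn G S v (f v)

variable {G} {S T : Set V} {D E : Finset V} {f g : V → V} {u v : V}

theorem isSemiPDOn_iff :
    IsSemiPDOn G S D ↔ (∀ v ∈ D, v ∈ S) ∧ Dominates G S D ∧ ∃ f, IsSemiPairing G S D f :=
  Iff.rfl

theorem DistLeTwoIn.symm (h : DistLeTwoIn G S u v) : DistLeTwoIn G S v u :=
  h.imp G.adj_symm fun ⟨w, hw, huw, hvw⟩ => ⟨w, hw, hvw, huw⟩

theorem DistLeTwoIn.mono (hST : S ⊆ T) (h : DistLeTwoIn G S u v) : DistLeTwoIn G T u v :=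
  h.imp id fun ⟨w, hw, huw, hvw⟩ => ⟨w, hST hw, huw, hvw⟩

theorem IsSemiPairing.mono (hST : S ⊆ T) (h : IsSemiPairing G S D f) : IsSemiPairing G T D f :=
  fun v hv => let ⟨h₁, h₂, h₃, h₄⟩ := h v hv; ⟨h₁, h₂, h₃, h₄.mono hST⟩

theorem IsSemiPairing.even_card (h : IsSemiPairing G S D f) : Even D.card := by
  rw [← ZMod.natCast_eq_zero_iff_even, card_eq_sum_ones, Nat.cast_sum, Nat.cast_one]
  exact sum_involution (fun v _ => f v) (fun _ _ => by decide) (fun v hv _ => (h v hv).2.1)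
    (fun v hv => (h v hv).1) (fun v hv => (h v hv).2.2.1)

variable [DecidableEq V]

theorem isSemiPairing_pair (huv : u ≠ v) (h : DistLeTwoIn G S u v) :
    IsSemiPairing G S {u, v} (Equiv.swap u v) := by
  intro x hx
  rcases Finset.mem_insert.1 hx with rfl | hx
  · simp [huv.symm, h]
  · rw [Finset.mem_singleton.1 hx]
    simp [huv, h.symm]

theorem IsSemiPairing.union (hf : IsSemiPairing G S D f) (hg : IsSemiPairing G S E g)
    (hDE : Disjoint D E) : IsSemiPairing G S (D ∪ E) fun v => if v ∈ D then f v else g v := by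
  intro v hv
  rcases Finset.mem_union.1 hv with hv | hv
  · obtain ⟨h₁, h₂, h₃, h₄⟩ := hf v hv
    simp only [if_pos hv, if_pos h₁]
    exact ⟨Finset.mem_union_left _ h₁, h₂, h₃, h₄⟩
  · obtain ⟨h₁, h₂, h₃, h₄⟩ := hg v hv
    simp only [if_neg (disjoint_right.1 hDE hv), if_neg (disjoint_right.1 hDE h₁)]
    exact ⟨Finset.mem_union_right _ h₁, h₂, h₃, h₄⟩

theorem exists_isSemiPairing_of_pairwise {P : Finset V} (hP : Even P.card)
    (h : ∀ x ∈ P, ∀ y ∈ P, x ≠ y → DistLeTwoIn G S x y) : ∃ f, IsSemiPairing G S P f := by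
  induction P using Finset.strongInduction with
  | H P ih =>
  rcases P.eq_empty_or_nonempty with rfl | ⟨x, hx⟩
  · exact ⟨id, by simp [IsSemiPairing]⟩
  have hP1 : 1 < P.card := by
    obtain ⟨c, hc⟩ := hP
    have := card_pos.2 ⟨x, hx⟩
    omega
  obtain ⟨y, hy, hyx⟩ := exists_mem_ne hP1 x
  have hxy : {x, y} ⊆ P := by simp [insert_subset_iff, hx, hy]
  obtain ⟨f, hf⟩ := ih (P \ {x, y}) (sdiff_ssubset hxy (by simp))
    (by rw [card_sdiff_of_subset hxy, card_pair hyx.symm]; exact hP.tsub even_two)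
    fun a ha b hb => h a (sdiff_subset ha) b (sdiff_subset hb)
  rw [← union_sdiff_of_subset hxy]
  exact ⟨_, (isSemiPairing_pair hyx.symm (h x hx y hy hyx.symm)).union hf disjoint_sdiff⟩

end SemiPairing

section SemiPD

variable {V : Type*} {G : SimpleGraph V} {S T : Set V} {D E : Finset V} {u v : V}

theorem IsSemiPDOn.exists_mem_eq_or_adj (hD : IsSemiPDOn G S D) (hv : v ∈ S) :
    ∃ u ∈ D, u = v ∨ G.Adj u v := by
  by_cases h : v ∈ D
  · exact ⟨v, h, Or.inl rfl⟩
  · obtain ⟨u, hu, huv⟩ := hD.2.1 v hv h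
    exact ⟨u, hu, Or.inr huv⟩

theorem IsSemiPDOn.even_card (hD : IsSemiPDOn G S D) : Even D.card :=
  let ⟨_, hf⟩ := hD.2.2
  IsSemiPairing.even_card (G := G) (S := S) hf

theorem IsSemiPDOn.two_le_card (hD : IsSemiPDOn G S D) (hS : S.Nonempty) : 2 ≤ D.card := by
  obtain ⟨v, hv⟩ := hS
  obtain ⟨u, hu, -⟩ := hD.exists_mem_eq_or_adj hv
  obtain ⟨f, hf⟩ := hD.2.2
  exact one_lt_card.2 ⟨u, hu, f u, (hf u hu).1, (hf u hu).2.1.symm⟩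

theorem IsSemiPDOn.insert_of_adj (hD : IsSemiPDOn G S D) (hu : u ∈ D) (huv : G.Adj u v) :
    IsSemiPDOn G (insert v S) D := by
  obtain ⟨hDS, hdom, f, hf⟩ := isSemiPDOn_iff.1 hD
  refine isSemiPDOn_iff.2 ⟨fun x hx => Set.mem_insert_of_mem _ (hDS x hx), ?_,
    f, hf.mono (Set.subset_insert _ _)⟩
  rintro x (rfl | hx) hxD
  exacts [⟨u, hu, huv⟩, hdom x hx hxD]

variable [DecidableEq V]

theorem isSemiPDOn_pair (huv : G.Adj u v) : IsSemiPDOn G {u, v} {u, v} :=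
  isSemiPDOn_iff.2 ⟨by simp, fun x hx hxD => absurd (by simpa using hx) hxD,
    _, isSemiPairing_pair huv.ne (Or.inl huv)⟩

theorem IsSemiPDOn.union (hD : IsSemiPDOn G S D) (hE : IsSemiPDOn G T E) (hDE : Disjoint D E) :
    IsSemiPDOn G (S ∪ T) (D ∪ E) := by
  obtain ⟨hDS, hDdom, f, hf⟩ := isSemiPDOn_iff.1 hD
  obtain ⟨hET, hEdom, g, hg⟩ := isSemiPDOn_iff.1 hE
  refine isSemiPDOn_iff.2 ⟨?_, ?_, _, (hf.mono Set.subset_union_left).union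
    (hg.mono Set.subset_union_right) hDE⟩
  · simp only [Finset.mem_union]
    rintro x (hx | hx)
    exacts [Or.inl (hDS x hx), Or.inr (hET x hx)]
  · simp only [Dominates, Finset.mem_union, not_or]
    rintro x (hx | hx) ⟨hxD, hxE⟩
    · obtain ⟨y, hy, hxy⟩ := hDdom x hx hxD
      exact ⟨y, Or.inl hy, hxy⟩
    · obtain ⟨y, hy, hxy⟩ := hEdom x hx hxE
      exact ⟨y, Or.inr hy, hxy⟩

end SemiPD

section Gamma

variable {V : Type*} {G : SimpleGraph V} {S T : Set V} {D E : Finset V}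

theorem IsMinSemiPDOn.gammaPr2On_eq (hD : IsMinSemiPDOn G S D) : gammaPr2On G S = D.card :=
  le_antisymm (Nat.sInf_le ⟨D, hD.1, rfl⟩)
    (le_csInf ⟨D.card, D, hD.1, rfl⟩ fun _ ⟨D', hD', hc⟩ => hc ▸ hD.2 D' hD')

theorem exists_isMinSemiPDOn (h : ∃ D, IsSemiPDOn G S D) : ∃ D, IsMinSemiPDOn G S D := by
  obtain ⟨D, hD⟩ := h
  obtain ⟨D₀, hD₀, hc⟩ := Nat.sInf_mem (s := {c | ∃ D, IsSemiPDOn G S D ∧ D.card = c})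
    ⟨D.card, D, hD, rfl⟩
  exact ⟨D₀, hD₀, fun D' hD' => hc ▸ Nat.sInf_le ⟨D', hD', rfl⟩⟩

theorem gammaPr2On_eq_add_card [DecidableEq V] (hS : ∃ D, IsSemiPDOn G S D)
    (hmin : ∀ D, IsMinSemiPDOn G S D → IsMinSemiPDOn G T (D ∪ E))
    (hdisj : ∀ D, IsSemiPDOn G S D → Disjoint D E) :
    gammaPr2On G T = gammaPr2On G S + E.card := by
  obtain ⟨D, hD⟩ := exists_isMinSemiPDOn hS
  rw [(hmin D hD).gammaPr2On_eq, hD.gammaPr2On_eq, card_union_of_disjoint (hdisj D hD.1)]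

end Gamma

section IntervalOrdering

variable {V : Type*} [LinearOrder V]

/-- Olariu's characterisation of the left-endpoint orders of interval graphs. -/
def IsIntervalOrdering (G : SimpleGraph V) : Prop :=
  ∀ ⦃x y z : V⦄, x < y → y < z → G.Adj x z → G.Adj x y

theorem isIntervalOrdering_of_intervals {G : SimpleGraph V} {a b : V → ℝ}
    (hab : ∀ x, a x ≤ b x) (ha : StrictMono a)
    (hadj : ∀ x y, G.Adj x y ↔ x ≠ y ∧ (Set.Icc (a x) (b x) ∩ Set.Icc (a y) (b y)).Nonempty) :
    IsIntervalOrdering G := by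
  intro x y z hxy hyz hxz
  obtain ⟨-, p, ⟨-, hpx⟩, hzp, -⟩ := (hadj x z).1 hxz
  exact (hadj x y).2 ⟨hxy.ne, a y, ⟨(ha hxy).le, ((ha hyz).le.trans hzp).trans hpx⟩, le_rfl, hab y⟩

def lowerNbhd (G : SimpleGraph V) (s : V) : Set V :=
  {x | x ≤ s ∧ (x = s ∨ G.Adj x s)}

/-- The closed ball of radius 2 around `s` in `G[Iic s]`. -/
def lowerNbhd₂ (G : SimpleGraph V) (s : V) : Set V :=
  {x | x ≤ s ∧ ∃ y ∈ lowerNbhd G s, x = y ∨ G.Adj x y}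

theorem lowerNbhd_subset_lowerNbhd₂ {G : SimpleGraph V} {s : V} :
    lowerNbhd G s ⊆ lowerNbhd₂ G s :=
  fun x hx => ⟨hx.1, x, hx, Or.inl rfl⟩

namespace IsIntervalOrdering

variable {G : SimpleGraph V} {x y z : V}

theorem adj_of_lt_of_le (hG : IsIntervalOrdering G) (hxy : x < y) (hyz : y ≤ z)
    (hxz : G.Adj x z) : G.Adj x y :=
  hyz.lt_or_eq.elim (fun hyz => hG hxy hyz hxz) fun h => h ▸ hxz

theorem exists_adj_lt (hG : IsIntervalOrdering G) (hc : G.Preconnected) (hyx : y < x) :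
    ∃ z < x, G.Adj z x := by
  obtain ⟨w⟩ := hc y x
  obtain ⟨d, -, hd₁, hd₂⟩ := w.exists_boundary_dart (Set.Iio x) hyx (lt_irrefl x)
  exact ⟨d.fst, hd₁, hG.adj_of_lt_of_le hd₁ (not_lt.1 hd₂) d.adj⟩

theorem exists_isSemiPDOn_Iic [PredOrder V] [WellFoundedLT V]
    (hG : IsIntervalOrdering G) (hc : G.Preconnected) (m : V) (hm : ¬ IsMin m) :
    ∃ D, IsSemiPDOn G (Set.Iic m) D := by
  induction m using WellFoundedLT.induction with
  | _ m ih =>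
  obtain ⟨z, hzm, hz⟩ := hG.exists_adj_lt hc (Order.pred_lt_of_not_isMin hm)
  have hzp : z ≤ Order.pred m := Order.le_pred_of_lt hzm
  have hIic : Set.Iic m = insert m (Set.Iic (Order.pred m)) := by
    rw [Set.Iic_pred_eq_Iio_of_not_isMin hm, Set.Iio_insert]
  by_cases hp : IsMin (Order.pred m)
  · refine ⟨{z, m}, ?_⟩
    rw [hIic, hp.Iic_eq, ← le_antisymm hzp (hp hzp), Set.pair_comm]
    exact isSemiPDOn_pair hz
  obtain ⟨D, hD⟩ := ih _ (Order.pred_lt_of_not_isMin hm) hp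
  by_cases hzD : z ∈ D
  · exact ⟨D, hIic ▸ hD.insert_of_adj hzD hz⟩
  have hmD : m ∉ D := fun h => (Order.pred_lt_of_not_isMin hm).not_ge (hD.1 m h)
  refine ⟨D ∪ {z, m}, ?_⟩
  convert hD.union (isSemiPDOn_pair hz) (by simp [hzD, hmD]) using 1
  rw [hIic, Set.union_insert, Set.union_singleton,
    Set.insert_eq_of_mem (Set.mem_insert_of_mem m (Set.mem_Iic.2 hzp))]

end IsIntervalOrdering

end IntervalOrdering

namespace IsIntervalOrdering

variable {V : Type*} [LinearOrder V] {G : SimpleGraph V} {s x y p q : V} {S : Set V}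

theorem mem_lowerNbhd_of_adj (hG : IsIntervalOrdering G) (hx : x ≤ s) (hy : s ≤ y)
    (hxy : G.Adj x y) : x ∈ lowerNbhd G s :=
  ⟨hx, hx.lt_or_eq.elim (fun hxs => Or.inr (hG.adj_of_lt_of_le hxs hy hxy)) Or.inl⟩

theorem adj_of_lt_of_mem_lowerNbhd (hG : IsIntervalOrdering G) (hx : x ∈ lowerNbhd G s)
    (hxy : x < y) (hy : y ≤ s) : G.Adj x y :=
  hG.adj_of_lt_of_le hxy hy (hx.2.resolve_left (hxy.trans_le hy).ne)

theorem isClique_lowerNbhd (hG : IsIntervalOrdering G) : G.IsClique (lowerNbhd G s) := by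
  intro x hx y hy hxy
  rcases hxy.lt_or_gt with hxy | hyx
  · exact hG.adj_of_lt_of_mem_lowerNbhd hx hxy hy.1
  · exact (hG.adj_of_lt_of_mem_lowerNbhd hy hyx hx.1).symm

theorem distLeTwoIn_of_mem_lowerNbhd₂ (hG : IsIntervalOrdering G) (hx : x ∈ lowerNbhd₂ G s)
    (hxy : x < y) (hy : y ≤ s) : DistLeTwoIn G (Set.Iic s) x y := by
  obtain ⟨-, c, hc, rfl | hxc⟩ := hx
  · exact Or.inl (hG.adj_of_lt_of_mem_lowerNbhd hc hxy hy)
  rcases lt_trichotomy c y with hcy | rfl | hyc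
  · exact Or.inr ⟨c, hc.1, hxc, (hG.adj_of_lt_of_mem_lowerNbhd hc hcy hy).symm⟩
  · exact Or.inl hxc
  · exact Or.inl (hG hxy hyc hxc)

theorem distLeTwoIn_lowerNbhd₂ (hG : IsIntervalOrdering G) (hx : x ∈ lowerNbhd₂ G s)
    (hy : y ∈ lowerNbhd₂ G s) (hxy : x ≠ y) : DistLeTwoIn G (Set.Iic s) x y :=
  hxy.lt_or_gt.elim (fun h => hG.distLeTwoIn_of_mem_lowerNbhd₂ hx h hy.1)
    fun h => (hG.distLeTwoIn_of_mem_lowerNbhd₂ hy h hx.1).symm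

theorem mem_lowerNbhd₂_of_distLeTwoIn (hG : IsIntervalOrdering G) (hp : p ≤ s) (hq : s ≤ q)
    (h : DistLeTwoIn G S p q) : p ∈ lowerNbhd₂ G s := by
  rcases h with hpq | ⟨y, -, hpy, hqy⟩
  · exact lowerNbhd_subset_lowerNbhd₂ (hG.mem_lowerNbhd_of_adj hp hq hpq)
  rcases le_or_gt y s with hys | hsy
  · exact ⟨hp, y, hG.mem_lowerNbhd_of_adj hys hq hqy.symm, Or.inr hpy⟩
  · exact lowerNbhd_subset_lowerNbhd₂ (hG.mem_lowerNbhd_of_adj hp hsy.le hpy)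

/-- A common neighbour above `s` of two vertices below `s` forces them to be adjacent. -/
theorem distLeTwoIn_Iic (hG : IsIntervalOrdering G) (hp : p ≤ s) (hq : q ≤ s) (hpq : p ≠ q)
    (h : DistLeTwoIn G S p q) : DistLeTwoIn G (Set.Iic s) p q := by
  rcases h with hpq' | ⟨y, -, hpy, hqy⟩
  · exact Or.inl hpq'
  rcases le_or_gt y s with hys | hsy
  · exact Or.inr ⟨y, hys, hpy, hqy⟩
  · exact Or.inl (hG.isClique_lowerNbhd (hG.mem_lowerNbhd_of_adj hp hsy.le hpy)
      (hG.mem_lowerNbhd_of_adj hq hsy.le hqy) hpq)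

end IsIntervalOrdering

section Restriction

variable {V : Type*} [LinearOrder V] {G : SimpleGraph V} {s κ : V} {S : Set V} {D : Finset V}
  {f : V → V}

theorem IsSemiPairing.mapsTo_filter (hf : IsSemiPairing G S D f) :
    ∀ v ∈ D.filter (fun v => v ≤ s ∧ f v ≤ s),
      v ∈ D ∧ v ≤ s ∧ f v ∈ D.filter (fun v => v ≤ s ∧ f v ≤ s) := by
  intro v hv
  obtain ⟨hvD, hvs, hfv⟩ := by simpa only [Finset.mem_filter] using hv
  exact ⟨hvD, hvs, by simp [(hf v hvD).1, (hf v hvD).2.2.1, hfv, hvs]⟩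

namespace IsIntervalOrdering

theorem isSemiPairing_Iic (hG : IsIntervalOrdering G) (hf : IsSemiPairing G S D f)
    {X : Finset V} (hX : ∀ v ∈ X, v ∈ D ∧ v ≤ s ∧ f v ∈ X) : IsSemiPairing G (Set.Iic s) X f := by
  intro v hv
  obtain ⟨hvD, hvs, hfv⟩ := hX v hv
  obtain ⟨-, hne, hff, hdist⟩ := hf v hvD
  exact ⟨hfv, hne, hff, hG.distLeTwoIn_Iic hvs (hX _ hfv).2.1 hne.symm hdist⟩

theorem isSemiPDOn_Iic_union (hG : IsIntervalOrdering G) (hf : IsSemiPairing G S D f)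
    {X P : Finset V} (hX : ∀ v ∈ X, v ∈ D ∧ v ≤ s ∧ f v ∈ X)
    (hP : ∀ v ∈ P, v ∈ lowerNbhd₂ G s) (hPe : Even P.card) (hXP : Disjoint X P)
    (hdom : Dominates G (Set.Iic s) (X ∪ P)) : IsSemiPDOn G (Set.Iic s) (X ∪ P) := by
  obtain ⟨g, hg⟩ := exists_isSemiPairing_of_pairwise hPe fun x hx y hy hxy =>
    hG.distLeTwoIn_lowerNbhd₂ (hP x hx) (hP y hy) hxy
  refine isSemiPDOn_iff.2 ⟨fun v hv => ?_, hdom, _, (hG.isSemiPairing_Iic hf hX).union hg hXP⟩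
  rcases Finset.mem_union.1 hv with hv | hv
  exacts [(hX v hv).2.1, (hP v hv).1]

theorem mem_lowerNbhd_of_forall_not_adj (hG : IsIntervalOrdering G) (hS : Set.Iic s ⊆ S)
    (hdom : Dominates G S D) {x : V} (hx : x ≤ s) (hxD : x ∉ D)
    (hnd : ∀ d ∈ D, d ≤ s → ¬ G.Adj d x) : x ∈ lowerNbhd G s := by
  obtain ⟨d, hd, hdx⟩ := hdom x (hS hx) hxD
  exact hG.mem_lowerNbhd_of_adj hx (not_le.1 fun hds => hnd d hd hds hdx).le hdx.symm

theorem dominates_filter_union (hG : IsIntervalOrdering G) (hS : Set.Iic s ⊆ S)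
    (hdom : Dominates G S D) {Y : Finset V} (hκY : κ ∈ Y) (hκ : κ ∈ lowerNbhd G s) :
    Dominates G (Set.Iic s) (D.filter (· ≤ s) ∪ Y) := by
  intro x hx hxE
  simp only [Finset.mem_union, Finset.mem_filter, not_or, not_and] at hxE
  by_cases h : ∃ d ∈ D, d ≤ s ∧ G.Adj d x
  · obtain ⟨d, hd, hds, hdx⟩ := h
    exact ⟨d, mem_union_left _ (mem_filter.2 ⟨hd, hds⟩), hdx⟩
  push Not at h
  have hxD : x ∉ D := fun hxD => hxE.1 hxD hx
  exact ⟨κ, mem_union_right _ hκY, hG.isClique_lowerNbhd hκ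
    (hG.mem_lowerNbhd_of_forall_not_adj hS hdom hx hxD h) fun e => hxE.2 (e ▸ hκY)⟩

theorem notMem_of_not_dominates (hG : IsIntervalOrdering G) (hS : Set.Iic s ⊆ S)
    (hdom : Dominates G S D) (hA : ¬ Dominates G (Set.Iic s) (D.filter (· ≤ s))) :
    ∀ x ∈ lowerNbhd G s, x ∉ D := by
  simp only [Dominates, Set.mem_Iic, Finset.mem_filter, not_and, not_forall, not_exists] at hA
  obtain ⟨y, hys, hyA, hnd⟩ := hA
  have hyD : y ∉ D := fun hyD => hyA hyD hys
  have hyK := hG.mem_lowerNbhd_of_forall_not_adj hS hdom hys hyD fun d hd hds => hnd d ⟨hd, hds⟩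
  intro x hx hxD
  exact hnd x ⟨hxD, hx.1⟩ (hG.isClique_lowerNbhd hx hyK fun e => hyD (e ▸ hxD))

theorem dominates_filter_erase (hG : IsIntervalOrdering G) (hS : Set.Iic s ⊆ S)
    (hdom : Dominates G S D) (hK : ∀ x ∈ lowerNbhd G s, x ∈ D) (hκ : κ < s) (hκs : G.Adj κ s) :
    Dominates G (Set.Iic s) ((D.filter (· ≤ s)).erase s) := by
  intro x hx hxE
  simp only [Finset.mem_erase, Finset.mem_filter, not_and] at hxE ⊢
  rcases eq_or_ne x s with rfl | hxs
  · exact ⟨κ, ⟨hκ.ne, hK κ ⟨hκ.le, Or.inr hκs⟩, hκ.le⟩, hκs⟩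
  have hxD : x ∉ D := fun hxD => hxE hxs hxD hx
  by_cases h : ∃ d ∈ D, d ≤ s ∧ G.Adj d x
  · obtain ⟨d, hd, hds, hdx⟩ := h
    refine ⟨d, ⟨?_, hd, hds⟩, hdx⟩
    rintro rfl
    exact hxD (hK x ⟨hx, Or.inr hdx.symm⟩)
  push Not at h
  exact absurd (hK x (hG.mem_lowerNbhd_of_forall_not_adj hS hdom hx hxD h)) hxD

theorem mem_lowerNbhd₂_of_mem_filter (hG : IsIntervalOrdering G) (hf : IsSemiPairing G S D f)
    {v : V} (hv : v ∈ D.filter fun v => v ≤ s ∧ s < f v) : v ∈ lowerNbhd₂ G s := by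
  obtain ⟨hvD, hvs, hsf⟩ := by simpa only [Finset.mem_filter] using hv
  exact hG.mem_lowerNbhd₂_of_distLeTwoIn hvs hsf.le (hf v hvD).2.2.2

theorem isSemiPDOn_filter_union (hG : IsIntervalOrdering G) (hf : IsSemiPairing G S D f)
    {Y : Finset V} (hY : ∀ y ∈ Y, y ∈ lowerNbhd G s ∧ y ∉ D)
    (heven : Even ((D.filter fun v => v ≤ s ∧ s < f v).card + Y.card))
    (hdom : Dominates G (Set.Iic s) (D.filter (· ≤ s) ∪ Y)) :
    IsSemiPDOn G (Set.Iic s) (D.filter (· ≤ s) ∪ Y) := by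
  set C := D.filter fun v => v ≤ s ∧ s < f v
  have hsplit : D.filter (· ≤ s) ∪ Y = D.filter (fun v => v ≤ s ∧ f v ≤ s) ∪ (C ∪ Y) := by
    ext v
    simp only [C, Finset.mem_union, Finset.mem_filter]
    have := le_or_gt (f v) s
    tauto
  have hCY : Disjoint C Y := disjoint_left.2 fun v hv hvY => (hY v hvY).2 (mem_filter.1 hv).1
  rw [hsplit] at hdom ⊢
  refine hG.isSemiPDOn_Iic_union hf hf.mapsTo_filter (fun v hv => ?_)
    (by rwa [card_union_of_disjoint hCY]) (disjoint_union_right.2 ⟨?_, ?_⟩) hdom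
  · rcases Finset.mem_union.1 hv with hv | hv
    exacts [hG.mem_lowerNbhd₂_of_mem_filter hf hv, lowerNbhd_subset_lowerNbhd₂ (hY v hv).1]
  · exact disjoint_filter.2 fun v _ h₁ h₂ => (h₂.2.trans_le h₁.2).false
  · exact disjoint_left.2 fun v hv hvY => (hY v hvY).2 (mem_filter.1 hv).1

theorem isSemiPDOn_filter_erase_of_lt (hG : IsIntervalOrdering G) (hf : IsSemiPairing G S D f)
    (hsD : s ∈ D) (hsf : s < f s) (hodd : Odd (D.filter fun v => v ≤ s ∧ s < f v).card)
    (hdom : Dominates G (Set.Iic s) ((D.filter (· ≤ s)).erase s)) :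
    IsSemiPDOn G (Set.Iic s) ((D.filter (· ≤ s)).erase s) := by
  set C := D.filter fun v => v ≤ s ∧ s < f v
  have hsC : s ∈ C := by simp [C, hsD, hsf]
  have hsplit : (D.filter (· ≤ s)).erase s =
      D.filter (fun v => v ≤ s ∧ f v ≤ s) ∪ C.erase s := by
    ext v
    simp only [C, Finset.mem_erase, Finset.mem_union, Finset.mem_filter]
    grind
  rw [hsplit] at hdom ⊢
  refine hG.isSemiPDOn_Iic_union hf hf.mapsTo_filter
    (fun v hv => hG.mem_lowerNbhd₂_of_mem_filter hf (mem_of_mem_erase hv))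
    (by rw [card_erase_of_mem hsC]; exact hodd.tsub_odd odd_one)
    (disjoint_left.2 fun v hv hv' => ?_) hdom
  simp only [C, Finset.mem_erase, Finset.mem_filter] at hv hv'
  exact (hv'.2.2.2.trans_le hv.2.2).false

theorem isSemiPDOn_filter_erase_of_le (hG : IsIntervalOrdering G) (hf : IsSemiPairing G S D f)
    (hsD : s ∈ D) (hfs : f s ≤ s) (hodd : Odd (D.filter fun v => v ≤ s ∧ s < f v).card)
    (hdom : Dominates G (Set.Iic s) ((D.filter (· ≤ s)).erase s)) :
    IsSemiPDOn G (Set.Iic s) ((D.filter (· ≤ s)).erase s) := by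
  obtain ⟨hfD, hfs', hff, hdist⟩ := hf s hsD
  set C := D.filter fun v => v ≤ s ∧ s < f v
  have hsplit : (D.filter (· ≤ s)).erase s =
      (D.filter (fun v => v ≤ s ∧ f v ≤ s) \ {s, f s}) ∪ insert (f s) C := by
    ext v
    simp only [C, Finset.mem_erase, Finset.mem_union, Finset.mem_filter, Finset.mem_sdiff,
      Finset.mem_insert, Finset.mem_singleton]
    grind
  have hσC : f s ∉ C := by simp [C, hff]
  rw [hsplit] at hdom ⊢
  refine hG.isSemiPDOn_Iic_union hf (fun v hv => ?_) (fun v hv => ?_)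
    (by rw [card_insert_of_notMem hσC]; exact hodd.add_one)
    (disjoint_left.2 fun v hv hv' => ?_) hdom
  · simp only [Finset.mem_sdiff, Finset.mem_filter, Finset.mem_insert, Finset.mem_singleton,
      not_or] at hv ⊢
    have := hf v hv.1.1
    grind
  · rcases Finset.mem_insert.1 hv with rfl | hv
    exacts [hG.mem_lowerNbhd₂_of_distLeTwoIn hfs le_rfl hdist.symm,
      hG.mem_lowerNbhd₂_of_mem_filter hf hv]
  · simp only [C, Finset.mem_sdiff, Finset.mem_filter, Finset.mem_insert,
      Finset.mem_singleton] at hv hv'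
    grind

theorem even_card_add_card (hG : IsIntervalOrdering G) (hf : IsSemiPairing G S D f) :
    Even ((D.filter fun v => v ≤ s ∧ s < f v).card + (D.filter (s < ·)).card) := by
  obtain ⟨a, ha⟩ := (hG.isSemiPairing_Iic (s := s) hf hf.mapsTo_filter).even_card
  obtain ⟨d, hd⟩ := hf.even_card
  have hA := card_filter_add_card_filter_not (s := D) (· ≤ s)
  have hA₀ := card_filter_add_card_filter_not (s := D.filter (· ≤ s)) (fun v => f v ≤ s)
  simp only [filter_filter, not_le] at hA hA₀
  exact ⟨d - a, by omega⟩

theorem two_lt_card_filter_lt (hG : IsIntervalOrdering G) (hS : Set.Iic s ⊆ S)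
    (hdom : Dominates G S D) (hKD : ∀ x ∈ lowerNbhd G s, x ∉ D) {u w : V} (hu : u ∈ D)
    (hw : w ∈ D) (huw : u ≠ w) (hsu : s < u) (hsw : s < w) (hnu : ¬ G.Adj s u)
    (hnw : ¬ G.Adj s w) : 2 < (D.filter (s < ·)).card := by
  have hsK : s ∈ lowerNbhd G s := ⟨le_rfl, Or.inl rfl⟩
  obtain ⟨e, he, hes⟩ := hdom s (hS le_rfl) (hKD s hsK)
  have hse : s < e := not_le.1 fun h => hKD e (hG.mem_lowerNbhd_of_adj h le_rfl hes) he
  exact two_lt_card.2 ⟨u, by simp [hu, hsu], w, by simp [hw, hsw], e, by simp [he, hse], huw,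
    fun h => hnu (h ▸ hes.symm), fun h => hnw (h ▸ hes.symm)⟩

theorem exists_isSemiPDOn_Iic_card_add_two_le (hG : IsIntervalOrdering G)
    (hS : Set.Iic s ⊆ S) (hD : IsSemiPDOn G S D) (hκ : κ < s) (hκs : G.Adj κ s) {u w : V}
    (hu : u ∈ D) (hw : w ∈ D) (huw : u ≠ w) (hsu : s < u) (hsw : s < w)
    (hnu : ¬ G.Adj s u) (hnw : ¬ G.Adj s w) :
    ∃ E, IsSemiPDOn G (Set.Iic s) E ∧ E.card + 2 ≤ D.card := by
  obtain ⟨-, hdom, f, hf⟩ := isSemiPDOn_iff.1 hD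
  set A := D.filter (· ≤ s)
  set C := D.filter fun v => v ≤ s ∧ s < f v
  set B := D.filter (s < ·)
  have hAB : A.card + B.card = D.card := by
    simpa only [not_le] using card_filter_add_card_filter_not (s := D) (· ≤ s)
  have hpar : Even (C.card + B.card) := hG.even_card_add_card hf
  have hB : 2 ≤ B.card :=
    (card_pair huw).symm.le.trans (card_le_card (by simp [insert_subset_iff, B, hu, hw, hsu, hsw]))
  have hsK : s ∈ lowerNbhd G s := ⟨le_rfl, Or.inl rfl⟩
  have hκK : κ ∈ lowerNbhd G s := ⟨hκ.le, Or.inr hκs⟩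
  by_cases hC : Even C.card
  · by_cases hA : Dominates G (Set.Iic s) A
    · have hE := hG.isSemiPDOn_filter_union hf (Y := ∅) (by simp) (by simpa) (by simpa)
      exact ⟨A, by simpa using hE, by omega⟩
    -- `D` misses the clique `N[s]`, so `s` is dominated from above and `s, κ` can be added
    have hKD := hG.notMem_of_not_dominates hS hdom hA
    have hB₃ : 2 < B.card := hG.two_lt_card_filter_lt hS hdom hKD hu hw huw hsu hsw hnu hnw
    refine ⟨A ∪ {s, κ}, hG.isSemiPDOn_filter_union hf ?_ ?_
      (hG.dominates_filter_union hS hdom (by simp) hsK), ?_⟩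
    · simpa using ⟨⟨hsK, hKD s hsK⟩, hκK, hKD κ hκK⟩
    · rw [card_pair hκ.ne']
      exact hC.add even_two
    · rw [card_union_of_disjoint (by simp [A, hKD s hsK, hKD κ hκK]), card_pair hκ.ne']
      obtain ⟨c, hc⟩ := (Nat.even_add.1 hpar).1 hC
      omega
  by_cases hK : ∀ x ∈ lowerNbhd G s, x ∈ D
  · have hsD := hK s hsK
    have hdom' := hG.dominates_filter_erase hS hdom hK hκ hκs
    have hodd := Nat.not_even_iff_odd.1 hC
    refine ⟨A.erase s, (lt_or_ge s (f s)).elim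
      (fun hsf => hG.isSemiPDOn_filter_erase_of_lt hf hsD hsf hodd hdom')
      (fun hfs => hG.isSemiPDOn_filter_erase_of_le hf hsD hfs hodd hdom'), ?_⟩
    rw [card_erase_of_mem (s := A) (mem_filter.2 ⟨hsD, le_rfl⟩)]
    omega
  push Not at hK
  obtain ⟨κ', hκ'K, hκ'D⟩ := hK
  refine ⟨A ∪ {κ'}, hG.isSemiPDOn_filter_union hf (by simpa using ⟨hκ'K, hκ'D⟩)
    (by rw [card_singleton]; exact (Nat.not_even_iff_odd.1 hC).add_one)
    (hG.dominates_filter_union hS hdom (mem_singleton_self κ') hκ'K), ?_⟩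
  have hBo : B.card % 2 = 1 :=
    Nat.odd_iff.1 (Nat.not_even_iff_odd.1 fun hBe => hC ((Nat.even_add.1 hpar).2 hBe))
  rw [card_union_of_disjoint (by simpa [A] using fun h => absurd h hκ'D), card_singleton]
  omega

end IsIntervalOrdering

end Restriction

section LeastNeighbors

variable {V : Type*} [LinearOrder V]

/-- `IsLeastNeighbor G x y` says `F(y) = x`. -/
def IsLeastNeighbor (G : SimpleGraph V) (x y : V) : Prop :=
  G.Adj x y ∧ ∀ z, G.Adj z y → x ≤ z

structure CaseJB (G : SimpleGraph V) (r k j i t b : V) : Prop where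
  r_lt_k : r < k
  k_lt_t : k < t
  t_lt_j : t < j
  j_lt_i : j < i
  least_i : IsLeastNeighbor G j i
  least_j : IsLeastNeighbor G k j
  least_k : IsLeastNeighbor G r k
  least_t : IsLeastNeighbor G b t
  not_adj_t_j : ¬ G.Adj t j
  le_t : ∀ l, k < l → l < j → ¬ G.Adj l j → l ≤ t
  not_covered : ¬ ∀ l, k < l → l < j → G.Adj l j ∨ G.Adj l r

namespace CaseJB

variable {G : SimpleGraph V} {r k j i t b s x : V} {S T : Set V} {D : Finset V}

theorem b_le_k (h : CaseJB G r k j i t b) (hG : IsIntervalOrdering G) : b ≤ k :=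
  h.least_t.2 k (hG h.k_lt_t h.t_lt_j h.least_j.1)

theorem b_lt_j (h : CaseJB G r k j i t b) (hG : IsIntervalOrdering G) : b < j :=
  (h.b_le_k hG).trans_lt (h.k_lt_t.trans h.t_lt_j)

theorem b_lt_i (h : CaseJB G r k j i t b) (hG : IsIntervalOrdering G) : b < i :=
  (h.b_lt_j hG).trans h.j_lt_i

theorem k_lt_i (h : CaseJB G r k j i t b) : k < i :=
  h.k_lt_t.trans (h.t_lt_j.trans h.j_lt_i)

theorem adj_b (h : CaseJB G r k j i t b) (hG : IsIntervalOrdering G) (hbx : b < x)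
    (hxt : x ≤ t) : G.Adj b x :=
  hG.adj_of_lt_of_le hbx hxt h.least_t.1

theorem r_lt_b (h : CaseJB G r k j i t b) (hG : IsIntervalOrdering G) : r < b := by
  obtain ⟨l, hkl, hlj, hl⟩ : ∃ l, k < l ∧ l < j ∧ ¬ G.Adj l j ∧ ¬ G.Adj l r := by
    simpa using h.not_covered
  by_contra! hbr
  rcases hbr.lt_or_eq with hbr | rfl
  · exact (h.least_k.2 b (h.adj_b hG (hbr.trans h.r_lt_k) h.k_lt_t.le)).not_gt hbr
  · exact hl.2 (h.adj_b hG (h.r_lt_k.trans hkl) (h.le_t l hkl hlj hl.1)).symm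

theorem distLeTwoIn_j_b (h : CaseJB G r k j i t b) (hG : IsIntervalOrdering G) (hk : k ∈ T) :
    DistLeTwoIn G T j b :=
  (h.b_le_k hG).lt_or_eq.elim
    (fun hbk => Or.inr ⟨k, hk, h.least_j.1.symm, h.adj_b hG hbk h.k_lt_t.le⟩)
    fun e => Or.inl (e ▸ h.least_j.1.symm)

theorem adj_j_or_adj_b (h : CaseJB G r k j i t b) (hG : IsIntervalOrdering G) (hbx : b < x)
    (hxi : x ≤ i) (hxj : x ≠ j) : G.Adj j x ∨ G.Adj b x := by
  rcases le_or_gt x t with hxt | htx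
  · exact Or.inr (h.adj_b hG hbx hxt)
  rcases hxj.lt_or_gt with hxj | hjx
  · exact Or.inl (not_not.1 fun hn => (h.le_t x (h.k_lt_t.trans htx) hxj
      fun e => hn e.symm).not_gt htx)
  · exact Or.inl (hG.adj_of_lt_of_le hjx hxi h.least_i.1)

theorem exists_mem_Ico (h : CaseJB G r k j i t b) (hG : IsIntervalOrdering G)
    (hD : IsSemiPDOn G S D) (ht : t ∈ S) : ∃ u ∈ D, b ≤ u ∧ u < j := by
  obtain ⟨u, hu, rfl | hut⟩ := hD.exists_mem_eq_or_adj ht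
  · exact ⟨u, hu, (h.b_le_k hG).trans h.k_lt_t.le, h.t_lt_j⟩
  refine ⟨u, hu, h.least_t.2 u hut, not_le.1 fun hju => h.not_adj_t_j ?_⟩
  exact hG.adj_of_lt_of_le h.t_lt_j hju hut.symm

theorem exists_mem_Ici (h : CaseJB G r k j i t b) (hD : IsSemiPDOn G S D) (hi : i ∈ S) :
    ∃ w ∈ D, j ≤ w := by
  obtain ⟨w, hw, rfl | hwi⟩ := hD.exists_mem_eq_or_adj hi
  exacts [⟨w, hw, h.j_lt_i.le⟩, ⟨w, hw, h.least_i.2 w hwi⟩]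

theorem four_le_card (h : CaseJB G r k j i t b) (hG : IsIntervalOrdering G) {v : V}
    (hvb : v < b) (hv : ¬ G.Adj v b) (hD : IsSemiPDOn G (Set.Iic i) D) : 4 ≤ D.card := by
  obtain ⟨d, hd, hdv⟩ :=
    hD.exists_mem_eq_or_adj (show v ∈ Set.Iic i from (hvb.trans (h.b_lt_i hG)).le)
  have hdb : d < b := by
    rcases hdv with rfl | hdv
    exacts [hvb, not_le.1 fun hbd => hv (hG.adj_of_lt_of_le hvb hbd hdv.symm)]
  obtain ⟨u, hu, hbu, huj⟩ := h.exists_mem_Ico hG hD (h.t_lt_j.trans h.j_lt_i).le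
  obtain ⟨w, hw, hjw⟩ := h.exists_mem_Ici hD (Set.mem_Iic.2 le_rfl)
  have h₃ : 2 < D.card := two_lt_card.2 ⟨d, hd, u, hu, w, hw, (hdb.trans_le hbu).ne,
    (hdb.trans ((h.b_lt_j hG).trans_le hjw)).ne, (huj.trans_le hjw).ne⟩
  obtain ⟨c, hc⟩ := hD.even_card
  omega

variable [DecidableEq V]

theorem isSemiPDOn_j_b (h : CaseJB G r k j i t b) (hG : IsIntervalOrdering G)
    (hT : ∀ x ∈ T, x ≤ i) (hj : j ∈ T) (hb : b ∈ T) (hk : k ∈ T)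
    (hlow : ∀ x ∈ T, x < b → G.Adj x b) : IsSemiPDOn G T {j, b} := by
  refine isSemiPDOn_iff.2 ⟨by simp [hj, hb], fun x hx hxD => ?_, _,
    isSemiPairing_pair (h.b_lt_j hG).ne' (h.distLeTwoIn_j_b hG hk)⟩
  simp only [Finset.mem_insert, Finset.mem_singleton, not_or] at hxD
  rcases Ne.lt_or_gt hxD.2 with hxb | hbx
  · exact ⟨b, by simp, (hlow x hx hxb).symm⟩
  rcases h.adj_j_or_adj_b hG hbx (hT x hx) hxD.1 with hjx | hbx
  exacts [⟨j, by simp, hjx⟩, ⟨b, by simp, hbx⟩]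

theorem isMinSemiPDOn_j_b (h : CaseJB G r k j i t b) (hG : IsIntervalOrdering G)
    (hlow : ∀ x < b, G.Adj x b) : IsMinSemiPDOn G (Set.Iic i) {j, b} :=
  ⟨h.isSemiPDOn_j_b hG (fun _ hx => hx) h.j_lt_i.le (h.b_lt_i hG).le h.k_lt_i.le
    fun x _ => hlow x,
   fun _ hD => (card_pair (h.b_lt_j hG).ne').trans_le (hD.two_le_card ⟨i, le_rfl⟩)⟩

theorem isMinSemiPDOn_v₀_v₁_j_b (h : CaseJB G r k j i t b) (hG : IsIntervalOrdering G)
    {v₀ v₁ : V} (hv₀ : ∀ x, v₀ ≤ x) (hv₁ : ∀ x, x ≤ v₁ → x = v₀ ∨ x = v₁) (h₀₁ : G.Adj v₀ v₁)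
    (hb₀ : ¬ G.Adj v₀ b) (hlow : ∀ x, v₀ < x → x < b → G.Adj x b) :
    IsMinSemiPDOn G (Set.Iic i) {v₀, v₁, j, b} := by
  have hv₀b : v₀ < b := (hv₀ r).trans_lt (h.r_lt_b hG)
  have hv₁b : v₁ < b := not_le.1 fun hbv => (hv₁ b hbv).elim hv₀b.ne' fun e => hb₀ (e ▸ h₀₁)
  have h₁ : IsSemiPDOn G (Set.Iic v₁) {v₀, v₁} := by
    rw [show Set.Iic v₁ = {v₀, v₁} from Set.ext fun x =>
      ⟨hv₁ x, by rintro (rfl | rfl); exacts [hv₀ _, le_rfl]⟩]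
    exact isSemiPDOn_pair h₀₁
  have h₂ : IsSemiPDOn G (Set.Ioc v₁ i) {j, b} :=
    h.isSemiPDOn_j_b hG (fun _ hx => hx.2) ⟨hv₁b.trans (h.b_lt_j hG), h.j_lt_i.le⟩
      ⟨hv₁b, (h.b_lt_i hG).le⟩ ⟨hv₁b.trans_le (h.b_le_k hG), h.k_lt_i.le⟩
      fun x hx => hlow x ((hv₀ v₁).trans_lt hx.1)
  have hdisj : Disjoint ({v₀, v₁} : Finset V) {j, b} := by
    have := h.b_lt_j hG
    simp only [disjoint_insert_left, disjoint_singleton_left, mem_insert, mem_singleton]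
    refine ⟨?_, ?_⟩ <;> rintro (e | e) <;> subst e <;> order
  refine ⟨?_, fun D hD => card_le_four.trans (h.four_le_card hG hv₀b hb₀ hD)⟩
  have := h₁.union h₂ hdisj
  rwa [Set.Iic_union_Ioc_eq_Iic (hv₁b.trans (h.b_lt_i hG)).le, insert_union, ← insert_eq] at this

theorem disjoint_j_b (h : CaseJB G r k j i t b) (hG : IsIntervalOrdering G) (hsb : s < b)
    (hD : IsSemiPDOn G (Set.Iic s) D) : Disjoint D {j, b} := by
  refine disjoint_left.2 fun v hv hjb => (show v ≤ s from hD.1 v hv).not_gt ?_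
  rcases mem_insert.1 hjb with rfl | e
  exacts [hsb.trans (h.b_lt_j hG), mem_singleton.1 e ▸ hsb]

theorem isMinSemiPDOn_union_j_b (h : CaseJB G r k j i t b) (hG : IsIntervalOrdering G)
    {κ : V} (hκ : κ < s) (hκs : G.Adj κ s) (hsb : s < b) (hnsb : ¬ G.Adj s b)
    (hlow : ∀ x, s < x → x < b → G.Adj x b) {Ds : Finset V}
    (hDs : IsMinSemiPDOn G (Set.Iic s) Ds) : IsMinSemiPDOn G (Set.Iic i) (Ds ∪ {j, b}) := by
  have hsi : s < i := hsb.trans (h.b_lt_i hG)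
  have h₂ : IsSemiPDOn G (Set.Ioc s i) {j, b} :=
    h.isSemiPDOn_j_b hG (fun _ hx => hx.2) ⟨hsb.trans (h.b_lt_j hG), h.j_lt_i.le⟩
      ⟨hsb, (h.b_lt_i hG).le⟩ ⟨hsb.trans_le (h.b_le_k hG), h.k_lt_i.le⟩ fun x hx => hlow x hx.1
  have hdisj := h.disjoint_j_b hG hsb hDs.1
  refine ⟨Set.Iic_union_Ioc_eq_Iic hsi.le ▸ hDs.1.union h₂ hdisj, fun D hD => ?_⟩
  obtain ⟨u, hu, hbu, huj⟩ := h.exists_mem_Ico hG hD (h.t_lt_j.trans h.j_lt_i).le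
  obtain ⟨w, hw, hjw⟩ := h.exists_mem_Ici hD (Set.mem_Iic.2 le_rfl)
  have hbw : b ≤ w := (h.b_lt_j hG).le.trans hjw
  have hnadj : ∀ {y}, b ≤ y → ¬ G.Adj s y := fun hby hsy => hnsb (hG.adj_of_lt_of_le hsb hby hsy)
  obtain ⟨E, hE, hcard⟩ := hG.exists_isSemiPDOn_Iic_card_add_two_le
    (Set.Iic_subset_Iic.2 hsi.le) hD hκ hκs hu hw (huj.trans_le hjw).ne (hsb.trans_le hbu)
    (hsb.trans_le hbw) (hnadj hbu) (hnadj hbw)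
  rw [card_union_of_disjoint hdisj, card_pair (h.b_lt_j hG).ne']
  have := hDs.2 E hE
  omega

end CaseJB

end LeastNeighbors

theorem interval_minSemiPD_cases_jb_general {n : ℕ} (a b' : Fin n → ℝ)
    (G : SimpleGraph (Fin n))
    (hab : ∀ i, a i < b' i)
    (hmono : StrictMono a)
    (hadj : ∀ i j : Fin n, G.Adj i j ↔
      i ≠ j ∧ (Set.Icc (a i) (b' i) ∩ Set.Icc (a j) (b' j)).Nonempty)
    (hconn : G.Connected)
    (v0 v1 : Fin n) (hv0 : (v0 : ℕ) = 0) (hv1 : (v1 : ℕ) = 1)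
    (r k j i : Fin n) (hrk : r < k) (hji : j < i)
    (hFi : G.Adj j i ∧ ∀ x : Fin n, G.Adj x i → j ≤ x)
    (hFj : G.Adj k j ∧ ∀ x : Fin n, G.Adj x j → k ≤ x)
    (hFk : G.Adj r k ∧ ∀ x : Fin n, G.Adj x k → r ≤ x)
    (hncov : ¬ ∀ l : Fin n, k < l → l < j → G.Adj l j ∨ G.Adj l r)
    (t : Fin n) (hkt : k < t) (htj : t < j) (htadj : ¬ G.Adj t j)
    (htmax : ∀ l : Fin n, k < l → l < j → ¬ G.Adj l j → l ≤ t)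
    (b : Fin n) (hFt : G.Adj b t ∧ ∀ x : Fin n, G.Adj x t → b ≤ x) :
    ((∀ x : Fin n, x < b → G.Adj x b) →
      IsMinSemiPDOn G {x : Fin n | x ≤ i} {j, b}) ∧
    ((¬ G.Adj v0 b ∧ ∀ x : Fin n, v0 < x → x < b → G.Adj x b) →
      IsMinSemiPDOn G {x : Fin n | x ≤ i} {v0, v1, j, b}) ∧
    (∀ s : Fin n, v0 < s → s < b → ¬ G.Adj s b →
      (∀ x : Fin n, x < b → ¬ G.Adj x b → x ≤ s) →
      (∀ Ds : Finset (Fin n), IsMinSemiPDOn G {x : Fin n | x ≤ s} Ds →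
        IsMinSemiPDOn G {x : Fin n | x ≤ i} (Ds ∪ {j, b})) ∧
      gammaPr2On G {x : Fin n | x ≤ i} = gammaPr2On G {x : Fin n | x ≤ s} + 2) := by
  have hG : IsIntervalOrdering G :=
    isIntervalOrdering_of_intervals (fun x => (hab x).le) hmono hadj
  have h : CaseJB G r k j i t b := ⟨hrk, hkt, htj, hji, hFi, hFj, hFk, hFt, htadj, htmax, hncov⟩
  have hc := hconn.preconnected
  have hv₀ : ∀ x, v0 ≤ x := fun x => Fin.le_def.2 (by omega)
  have hv₁ : ∀ x, x ≤ v1 → x = v0 ∨ x = v1 := fun x hx => by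
    have := Fin.le_def.1 hx
    simp only [Fin.ext_iff]
    omega
  have h₀₁ : G.Adj v0 v1 := by
    obtain ⟨z, hz, hzv⟩ := hG.exists_adj_lt hc (show v0 < v1 from Fin.lt_def.2 (by omega))
    rwa [((hv₁ z hz.le).resolve_right hz.ne)] at hzv
  refine ⟨h.isMinSemiPDOn_j_b hG,
    fun ⟨hb₀, hlow⟩ => h.isMinSemiPDOn_v₀_v₁_j_b hG hv₀ hv₁ h₀₁ hb₀ hlow,
    fun s hv₀s hsb hnsb hmax => ?_⟩
  have hlow : ∀ x, s < x → x < b → G.Adj x b :=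
    fun x hsx hxb => not_not.1 fun hn => (hmax x hxb hn).not_gt hsx
  obtain ⟨κ, hκ, hκs⟩ := hG.exists_adj_lt hc hv₀s
  have hmin := fun Ds => h.isMinSemiPDOn_union_j_b hG hκ hκs hsb hnsb hlow (Ds := Ds)
  refine ⟨hmin, ?_⟩
  rw [← card_pair (h.b_lt_j hG).ne']
  exact gammaPr2On_eq_add_card (hG.exists_isSemiPDOn_Iic hc s (not_isMin_of_lt hv₀s)) hmin
    fun D hD => h.disjoint_j_b hG hsb hD

/-- Let `G` be a connected interval graph with interval model `I_i = [a i, b i]`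
having pairwise distinct endpoints, vertices in left-end ordering, and
`G_i = G[{x | x ≤ i}]`; `v0, v1` denote the first two vertices (`v_1, v_2` in
1-indexed notation). Suppose `r < k < j < i` with `F(v_i) = v_j`, `F(v_j) = v_k`,
`F(v_k) = v_r` (`F` = least-index neighbor), and not every vertex `v_l` with
`k < l < j` is adjacent to a vertex of `{v_j, v_r}`. Let
`t = max{l : k < l < j, v_l v_j ∉ E}` (assumed to exist) and `F(v_t) = v_b`. Then:
(a) if `L(v_b) = v_0` (every vertex below `v_b` is adjacent to `v_b`), then
`{v_j, v_b}` is a minimum semipaired dominating set of `G_i`;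
(b) if `L(v_b) = v_1`, then `{v_1, v_2, v_j, v_b}` is a minimum semipaired
dominating set of `G_i`;
(c) if `L(v_b) = v_s` with `s ≥ 2`, then for every minimum semipaired dominating set
`D_s` of `G_s` the set `D_s ∪ {v_j, v_b}` is a minimum semipaired dominating set of
`G_i`; in particular `γ_pr2(G_i) = γ_pr2(G_s) + 2`. -/
theorem interval_minSemiPD_cases_jb {n : ℕ} (a b' : Fin n → ℝ)
    (G : SimpleGraph (Fin n))
    (hab : ∀ i, a i < b' i)
    (hbinj : Function.Injective b')
    (habne : ∀ i j : Fin n, a i ≠ b' j)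
    (hmono : StrictMono a)
    (hadj : ∀ i j : Fin n, G.Adj i j ↔
      i ≠ j ∧ (Set.Icc (a i) (b' i) ∩ Set.Icc (a j) (b' j)).Nonempty)
    (hconn : G.Connected)
    (v0 v1 : Fin n) (hv0 : (v0 : ℕ) = 0) (hv1 : (v1 : ℕ) = 1)
    (r k j i : Fin n) (hrk : r < k) (hkj : k < j) (hji : j < i)
    (hFi : G.Adj j i ∧ ∀ x : Fin n, G.Adj x i → j ≤ x)
    (hFj : G.Adj k j ∧ ∀ x : Fin n, G.Adj x j → k ≤ x)
    (hFk : G.Adj r k ∧ ∀ x : Fin n, G.Adj x k → r ≤ x)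
    (hncov : ¬ ∀ l : Fin n, k < l → l < j → G.Adj l j ∨ G.Adj l r)
    (t : Fin n) (hkt : k < t) (htj : t < j) (htadj : ¬ G.Adj t j)
    (htmax : ∀ l : Fin n, k < l → l < j → ¬ G.Adj l j → l ≤ t)
    (b : Fin n) (hFt : G.Adj b t ∧ ∀ x : Fin n, G.Adj x t → b ≤ x) :
    ((∀ x : Fin n, x < b → G.Adj x b) →
      IsMinSemiPDOn G {x : Fin n | x ≤ i} {j, b}) ∧
    ((¬ G.Adj v0 b ∧ ∀ x : Fin n, v0 < x → x < b → G.Adj x b) →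
      IsMinSemiPDOn G {x : Fin n | x ≤ i} {v0, v1, j, b}) ∧
    (∀ s : Fin n, v0 < s → s < b → ¬ G.Adj s b →
      (∀ x : Fin n, x < b → ¬ G.Adj x b → x ≤ s) →
      (∀ Ds : Finset (Fin n), IsMinSemiPDOn G {x : Fin n | x ≤ s} Ds →
        IsMinSemiPDOn G {x : Fin n | x ≤ i} (Ds ∪ {j, b})) ∧
      gammaPr2On G {x : Fin n | x ≤ i} = gammaPr2On G {x : Fin n | x ≤ s} + 2) :=
  interval_minSemiPD_cases_jb_general a b' G hab hmono hadj hconn v0 v1 hv0 hv1 r k j i hrk hji hFi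
    hFj hFk hncov t hkt htj htadj htmax b hFt
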